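/- Soundness of the sumcheck protocol: for any (possibly dishonest) deterministic prover function, any polynomial p with vars p ⊆ set vs for a duplicate-free variable list vs, deg p ≤ d, and nonempty H, the probability over uniformly random tuples rs ∈ F^(length vs) that the sumcheck verifier accepts while v ≠ ∑_{σ : set vs → H} eval p σ is at most d · (length vs) / |F|. -/

import Mathlib

open MvPolynomial

/-- Partially evaluate `p` under a partial substitution `σ`. -/
noncomputable def inst {V R : Type*} [CommRing R]
    (p : MvPolynomial V R) (σ : V → Option R) : MvPolynomial V R :=
  aeval (fun x => (σ x).elim (X x) C) p

/-- Evaluate `p` fully, using `σ` where defined and `0` as a default elsewhere. -/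
noncomputable def evalSubst {V R : Type*} [CommRing R]
    (p : MvPolynomial V R) (σ : V → Option R) : R :=
  eval (fun x => (σ x).getD 0) p

/-- `ρ` overridden by `σ` (with `σ` taking priority on its domain). -/
def override {V R : Type*} (ρ σ : V → Option R) : V → Option R :=
  fun x => (σ x).elim (ρ x) some

/-- The partial substitution with domain `W` determined by a function `f : W → H`. -/
def toSubst {V R : Type*} [DecidableEq V] (W : Finset V) (H : Finset R)
    (f : ↥W → ↥H) : V → Option R :=
  fun x => if h : x ∈ W then some ((f ⟨x, h⟩ : ↥H) : R) else none

/-- The singleton substitution `[x ↦ r]`. -/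
def single {V R : Type*} [DecidableEq V] (x : V) (r : R) : V → Option R :=
  fun y => if y = x then some r else none

/-- A (possibly dishonest) deterministic prover: given the current sumcheck instance
`(H, p, v)`, the current variable, the remaining variables, the last randomness, and
its state, it returns a claimed univariate polynomial and a new state. -/
abbrev Prover (V F S : Type*) [CommRing F] : Type _ :=
  (Finset F × MvPolynomial V F × F) → V → List V → F → S → MvPolynomial V F × S

/-- The recursively defined sumcheck interaction: returns the verifier's verdict. -/
noncomputable def sumcheck {V F S : Type*} [CommRing F] [DecidableEq V]
    (pr : Prover V F S) :
    S → Finset F → MvPolynomial V F → F → F → List (V × F) → Prop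
  | s, _H, p, v, _r, [] => v = evalSubst p (fun _ => none)
  | s, H, p, v, r, (x, r') :: rm =>
      let res := pr (H, p, v) x (rm.map Prod.fst) r s
      (↑res.1.vars : Set V) ⊆ {x} ∧
      res.1.totalDegree ≤ p.totalDegree ∧
      v = ∑ h ∈ H, evalSubst res.1 (single x h) ∧
      sumcheck pr res.2 H (inst p (single x r')) (evalSubst res.1 (single x r')) r' rm

/-- The honest prover of the sumcheck protocol. -/
noncomputable def honestProver {V F : Type*} [CommRing F] [DecidableEq V] :
    Prover V F Unit :=
  fun I x xs _ _ => (∑ f : (↥xs.toFinset → ↥I.1), inst I.2.1 (toSubst xs.toFinset I.1 f), ())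

/-!
Suppose the claim `v` is false and look at the first round. Let `q` be the prover's polynomial and
`g` the honest one (`sumOut`), whose values on `H` add up to the true sum. The verifier's check
`v = ∑_{h ∈ H} q(h)` forces `q ≠ g`, so `q - g`, of degree at most `d` in the challenge, vanishes
at no more than `d` challenges `r`; at every other `r` the new claim `q(r)` about `p[x ↦ r]` is
false again. Hence each round adds at most `d / |F|` to the probability of being fooled.
-/

open Finset

section Degree

variable {V R : Type*} [CommRing R]

theorem totalDegree_aeval_le {W : Type*} (g : V → MvPolynomial W R)
    (hg : ∀ i, (g i).totalDegree ≤ 1) (q : MvPolynomial V R) :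
    (aeval g q).totalDegree ≤ q.totalDegree := by
  conv_lhs => rw [q.as_sum, map_sum]
  refine totalDegree_finsetSum_le fun u hu => ?_
  rw [aeval_monomial, Finsupp.prod]
  refine (totalDegree_mul _ _).trans ?_
  rw [algebraMap_eq, totalDegree_C, zero_add]
  refine (totalDegree_finsetProd _ _).trans (le_trans ?_ (le_totalDegree hu))
  refine Finset.sum_le_sum fun i _ => (totalDegree_pow _ _).trans ?_
  simpa using Nat.mul_le_mul_left (u i) (hg i)

theorem natDegree_aeval_le (g : V → Polynomial R) (hg : ∀ i, (g i).natDegree ≤ 1)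
    (q : MvPolynomial V R) : (aeval g q).natDegree ≤ q.totalDegree := by
  conv_lhs => rw [q.as_sum, map_sum]
  refine Polynomial.natDegree_sum_le_of_forall_le _ _ fun u hu => ?_
  rw [aeval_monomial, Finsupp.prod]
  refine Polynomial.natDegree_mul_le.trans ?_
  rw [Polynomial.algebraMap_eq, Polynomial.natDegree_C, zero_add]
  refine (Polynomial.natDegree_prod_le _ _).trans (le_trans ?_ (le_totalDegree hu))
  refine Finset.sum_le_sum fun i _ => Polynomial.natDegree_pow_le.trans ?_
  simpa using Nat.mul_le_mul_left (u i) (hg i)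

theorem totalDegree_inst_le (p : MvPolynomial V R) (σ : V → Option R) :
    (inst p σ).totalDegree ≤ p.totalDegree := by
  refine totalDegree_aeval_le _ (fun i => ?_) p
  cases σ i with
  | none => simpa [X] using totalDegree_monomial_le (Finsupp.single i 1) (1 : R)
  | some c => simp [totalDegree_C]

end Degree

theorem card_filter_evalSubst_single_eq_zero_le {V R : Type*} [CommRing R] [IsDomain R]
    [Fintype R] [DecidableEq R] [DecidableEq V] (q : MvPolynomial V R) (x : V)
    (hq : ∃ a, evalSubst q (single x a) ≠ 0) :
    #{a | evalSubst q (single x a) = 0} ≤ q.totalDegree := by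
  set Q : Polynomial R := aeval (fun y => if y = x then Polynomial.X else 0) q
  have hQ : ∀ a, Q.eval a = evalSubst q (single x a) := fun a => by
    rw [← Polynomial.coe_aeval_eq_eval, comp_aeval_apply, evalSubst, ← aeval_eq_eval]
    congr 1
    ext y
    by_cases hy : y = x <;> simp [single, hy]
  have hQ0 : Q ≠ 0 := by
    rintro h
    obtain ⟨a, ha⟩ := hq
    simp [← hQ, h] at ha
  calc #{a | evalSubst q (single x a) = 0}
      ≤ Q.natDegree := Polynomial.card_le_degree_of_subset_roots fun a ha => by
        simp_all [Polynomial.mem_roots hQ0]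
    _ ≤ q.totalDegree := natDegree_aeval_le _ (fun y => by split_ifs <;> simp) q

section HypercubeSum

variable {V R : Type*}

theorem override_comm {ρ σ : V → Option R} (h : ∀ y, ρ y = none ∨ σ y = none) :
    override ρ σ = override σ ρ := by
  ext y : 1
  rcases h y with h | h <;> simp [override, h] <;> cases _ : σ y <;> cases _ : ρ y <;> simp_all

variable [CommRing R]

theorem evalSubst_inst (p : MvPolynomial V R) (σ τ : V → Option R) :
    evalSubst (inst p σ) τ = evalSubst p (override τ σ) := by
  rw [evalSubst, inst, ← aeval_eq_eval, comp_aeval_apply, evalSubst, ← aeval_eq_eval]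
  congr 1
  ext y
  cases h : σ y <;> simp [override, h]

variable [DecidableEq V]

noncomputable def hypercubeSum (W : Finset V) (H : Finset R) (p : MvPolynomial V R) : R :=
  ∑ f : (↥W → ↥H), evalSubst p (toSubst W H f)

/-- The polynomial sent by `honestProver`. -/
noncomputable def sumOut (W : Finset V) (H : Finset R) (p : MvPolynomial V R) :
    MvPolynomial V R :=
  ∑ f : (↥W → ↥H), inst p (toSubst W H f)

theorem hypercubeSum_empty (H : Finset R) (p : MvPolynomial V R) :
    hypercubeSum ∅ H p = evalSubst p (fun _ => none) := by
  rw [hypercubeSum, Fintype.sum_unique]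
  rfl

theorem hypercubeSum_inst_single {W : Finset V} {x : V} (hx : x ∉ W) (H : Finset R)
    (p : MvPolynomial V R) (r : R) :
    hypercubeSum W H (inst p (single x r)) = evalSubst (sumOut W H p) (single x r) := by
  rw [hypercubeSum, sumOut, evalSubst, map_sum]
  refine Fintype.sum_congr _ _ fun f => ?_
  rw [← evalSubst, evalSubst_inst, evalSubst_inst, override_comm fun y => ?_]
  by_cases hy : y = x
  · simp [toSubst, hy, hx]
  · simp [single, hy]

theorem hypercubeSum_insert {W : Finset V} {x : V} (hx : x ∉ W) (H : Finset R)
    (p : MvPolynomial V R) :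
    hypercubeSum (insert x W) H p = ∑ h ∈ H, hypercubeSum W H (inst p (single x h)) := by
  let e : (↥(insert x W) → ↥H) ≃ ↥H × (↥W → ↥H) :=
    ((subtypeInsertEquivOption hx).arrowCongr (Equiv.refl ↥H)).trans Equiv.piOptionEquivProd
  simp only [hypercubeSum]
  rw [← Finset.sum_coe_sort H, ← Fintype.sum_prod_type']
  refine Fintype.sum_equiv e _ _ fun g => ?_
  rw [evalSubst_inst]
  congr 1
  ext y : 1
  by_cases hy : y = x
  · subst hy
    simp [e, toSubst, override, single, hx, subtypeInsertEquivOption]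
  · by_cases hyW : y ∈ W <;>
      simp [e, toSubst, override, single, hy, hyW, subtypeInsertEquivOption]

end HypercubeSum

theorem card_filter_evalSubst_eq_hypercubeSum_le {V R : Type*} [CommRing R] [IsDomain R]
    [Fintype R] [DecidableEq R] [DecidableEq V] {W : Finset V} {x : V} (hx : x ∉ W) (H : Finset R)
    {p q : MvPolynomial V R} {d : ℕ} (hp : p.totalDegree ≤ d) (hq : q.totalDegree ≤ d)
    (hclaim : ∑ h ∈ H, evalSubst q (single x h) ≠ hypercubeSum (insert x W) H p) :
    #{a | evalSubst q (single x a) = hypercubeSum W H (inst p (single x a))} ≤ d := by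
  set D := q - sumOut W H p
  have hD : ∀ a, evalSubst D (single x a) =
      evalSubst q (single x a) - hypercubeSum W H (inst p (single x a)) := fun a => by
    rw [hypercubeSum_inst_single hx]
    exact map_sub (eval _) _ _
  have hD0 : ∃ a, evalSubst D (single x a) ≠ 0 := by
    by_contra! h
    refine hclaim ((hypercubeSum_insert hx H p).symm ▸ Finset.sum_congr rfl fun a _ => ?_)
    rw [← sub_eq_zero, ← hD, h]
  have hDdeg : D.totalDegree ≤ d :=
    (totalDegree_sub _ _).trans <| max_le hq <| totalDegree_finsetSum_le fun _ _ =>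
      (totalDegree_inst_le _ _).trans hp
  simpa only [hD, sub_eq_zero] using
    (card_filter_evalSubst_single_eq_zero_le D x hD0).trans hDdeg

theorem ncard_setOf_eq_sum_ncard_cons {α : Type*} [Fintype α] {n : ℕ}
    (P : (Fin (n + 1) → α) → Prop) :
    {rs | P rs}.ncard = ∑ a, {ts : Fin n → α | P (Fin.cons a ts)}.ncard := by
  let e : {rs // P rs} ≃ Σ a, {ts : Fin n → α // P (Fin.cons a ts)} :=
    ((Fin.consEquiv fun _ => α).subtypeEquiv fun _ => Iff.rfl).symm.trans
      (Equiv.subtypeProdEquivSigmaSubtype fun a ts => P (Fin.cons a ts))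
  simp only [← Nat.card_coe_set_eq]
  exact (Nat.card_congr e).trans Nat.card_sigma

theorem ncard_mul_card_le_of_fibers {α : Type*} [Fintype α] {n d : ℕ}
    (P : (Fin (n + 1) → α) → Prop) (B : Finset α) (hB : #B ≤ d)
    (hfiber : ∀ a ∉ B,
      {ts | P (Fin.cons a ts)}.ncard * Fintype.card α ≤ d * n * Fintype.card α ^ n) :
    {rs | P rs}.ncard * Fintype.card α ≤ d * (n + 1) * Fintype.card α ^ (n + 1) := by
  classical
  set q := Fintype.card α
  have hbad : ∀ a, {ts : Fin n → α | P (Fin.cons a ts)}.ncard ≤ q ^ n := fun a => by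
    simpa using Set.ncard_le_card {ts : Fin n → α | P (Fin.cons a ts)}
  rw [ncard_setOf_eq_sum_ncard_cons, Finset.sum_mul, ← Finset.sum_add_sum_compl B]
  calc ∑ a ∈ B, {ts | P (Fin.cons a ts)}.ncard * q
        + ∑ a ∈ Bᶜ, {ts | P (Fin.cons a ts)}.ncard * q
      ≤ ∑ a ∈ B, q ^ n * q + ∑ a ∈ Bᶜ, d * n * q ^ n := by
        refine add_le_add (Finset.sum_le_sum fun a _ => ?_) (Finset.sum_le_sum fun a ha => ?_)
        · exact Nat.mul_le_mul_right q (hbad a)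
        · exact hfiber a (Finset.mem_compl.mp ha)
    _ ≤ d * (q ^ n * q) + q * (d * n * q ^ n) := by
        simp only [Finset.sum_const, smul_eq_mul]
        gcongr
        exact Finset.card_le_univ _
    _ = d * (n + 1) * q ^ (n + 1) := by ring

section Protocol

variable {V F S : Type*} [DecidableEq V]

theorem sumcheck_cons_zip_ofFn_cons [CommRing F] (pr : Prover V F S) (s : S) (H : Finset F)
    (p : MvPolynomial V F) (v r : F) (x : V) (xs : List V) (a : F) (ts : Fin xs.length → F) :
    sumcheck pr s H p v r ((x :: xs).zip (List.ofFn (Fin.cons a ts : Fin (xs.length + 1) → F))) ↔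
      let res := pr (H, p, v) x xs r s
      (↑res.1.vars : Set V) ⊆ {x} ∧ res.1.totalDegree ≤ p.totalDegree ∧
        v = ∑ h ∈ H, evalSubst res.1 (single x h) ∧
        sumcheck pr res.2 H (inst p (single x a)) (evalSubst res.1 (single x a)) a
          (xs.zip (List.ofFn ts)) := by
  rw [List.ofFn_succ, List.zip_cons_cons, sumcheck, List.map_fst_zip (by simp)]
  simp

theorem ncard_sumcheck_accepts_false_claim_mul_card_le [Field F] [Fintype F]
    (pr : Prover V F S) (H : Finset F) {d : ℕ} {vs : List V} (hvs : vs.Nodup)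
    (s : S) (p : MvPolynomial V F) (v r : F) (hp : p.totalDegree ≤ d) :
    {rs : Fin vs.length → F |
        sumcheck pr s H p v r (vs.zip (List.ofFn rs)) ∧ v ≠ hypercubeSum vs.toFinset H p}.ncard
        * Fintype.card F ≤ d * vs.length * Fintype.card F ^ vs.length := by
  classical
  induction vs generalizing s p v r with
  | nil => simp [sumcheck, hypercubeSum_empty]
  | cons x xs ih =>
    obtain ⟨hx, hxs⟩ := List.nodup_cons.mp hvs
    have hxW : x ∉ xs.toFinset := by simpa using hx
    set res := pr (H, p, v) x xs r s
    by_cases hround : res.1.totalDegree ≤ p.totalDegree ∧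
        v = ∑ h ∈ H, evalSubst res.1 (single x h) ∧ v ≠ hypercubeSum (insert x xs.toFinset) H p
    swap
    · rw [(Set.ncard_eq_zero).mpr (Set.eq_empty_of_forall_notMem fun rs hrs => ?_), zero_mul]
      · exact Nat.zero_le _
      obtain ⟨hacc, hne⟩ := hrs
      rw [← Fin.cons_self_tail rs, sumcheck_cons_zip_ofFn_cons] at hacc
      exact hround ⟨hacc.2.1, hacc.2.2.1, by simpa using hne⟩
    obtain ⟨hdeg, hv, hfalse⟩ := hround
    refine ncard_mul_card_le_of_fibers _ _
      (card_filter_evalSubst_eq_hypercubeSum_le hxW H hp (hdeg.trans hp) (hv ▸ hfalse))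
      fun a ha => ?_
    refine le_trans (Nat.mul_le_mul_right _ (Set.ncard_le_ncard ?_ (Set.toFinite _)))
      (ih hxs res.2 (inst p (single x a)) (evalSubst res.1 (single x a)) a
        ((totalDegree_inst_le _ _).trans hp))
    rintro ts ⟨hacc, -⟩
    exact ⟨((sumcheck_cons_zip_ofFn_cons ..).1 hacc).2.2.2, by simpa using ha⟩

end Protocol

theorem sumcheck_soundness_general {V F : Type*} [Field F] [Fintype F] [DecidableEq V]
    {S : Type*} (pr : Prover V F S) (s : S)
    (H : Finset F) (p : MvPolynomial V F) (v : F) (d : ℕ) (vs : List V) (r : F)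
    (hnodup : vs.Nodup)
    (hdeg : p.totalDegree ≤ d) :
    ({rs : Fin vs.length → F |
        sumcheck pr s H p v r (vs.zip (List.ofFn rs)) ∧
        v ≠ ∑ f : (↥vs.toFinset → ↥H), evalSubst p (toSubst vs.toFinset H f)}.ncard : ℝ)
      / (Fintype.card F : ℝ) ^ vs.length
      ≤ (d * vs.length : ℝ) / (Fintype.card F : ℝ) := by
  have hcard : (0 : ℝ) < Fintype.card F := by exact_mod_cast Fintype.card_pos
  rw [div_le_div_iff₀ (by positivity) hcard]
  exact_mod_cast ncard_sumcheck_accepts_false_claim_mul_card_le pr H hnodup s p v r hdeg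

theorem sumcheck_soundness {V F : Type*} [Field F] [Fintype F] [DecidableEq V]
    {S : Type*} (pr : Prover V F S) (s : S)
    (H : Finset F) (p : MvPolynomial V F) (v : F) (d : ℕ) (vs : List V) (r : F)
    (hvars : (↑p.vars : Set V) ⊆ ↑vs.toFinset)
    (hnodup : vs.Nodup)
    (hdeg : p.totalDegree ≤ d)
    (hH : H.Nonempty) :
    ({rs : Fin vs.length → F |
        sumcheck pr s H p v r (vs.zip (List.ofFn rs)) ∧
        v ≠ ∑ f : (↥vs.toFinset → ↥H), evalSubst p (toSubst vs.toFinset H f)}.ncard : ℝ)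
      / (Fintype.card F : ℝ) ^ vs.length
      ≤ (d * vs.length : ℝ) / (Fintype.card F : ℝ) :=
  sumcheck_soundness_general pr s H p v d vs r hnodup hdeg
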